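/- Let Ω = C(ℝ₊, ℝ^d) be the canonical space with canonical filtration F and Wiener measure P, let U be a Polish space, and let ν be a U-valued F-predictable process. Fix t ≥ 0 and w ∈ Ω, and define the shifted control ν^{t,w}_s(ω) := ν_s(w ⊗_t ω) for (s, ω) ∈ ℝ₊ × Ω. Then ν^{t,w} is an F-predictable process and, under P, the σ-algebra σ(ν^{t,w}_s, s ≥ 0) is independent of F_t. -/

import Mathlib

/-!
The map `ω ↦ w ⊗_t ω` is `F_u`/`F_u`-measurable for every `u`, so `(s, ω) ↦ (s, w ⊗_t ω)` pulls
the generating rectangles of the predictable σ-algebra back to generating rectangles. Moreover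
`(w ⊗_t ω)(r) = w(r ∧ t) + ω(r ∨ t) - ω(t)`, so every `ν^{t,w}_s` is a function of the increments
`B_{r ∨ t} - B_t`; these generate a σ-algebra independent of `F_t`, by induction over finitely
many increments, each independent of the past.
-/

open MeasureTheory ProbabilityTheory
open scoped NNReal

noncomputable section

/-- The canonical space `Ω = C(ℝ₊, ℝ^d)` of continuous paths. -/
abbrev CanonSp (d : ℕ) := C(ℝ≥0, EuclideanSpace ℝ (Fin d))

/-- The Borel σ-field `𝓕` of the canonical space. -/
instance (d : ℕ) : MeasurableSpace (CanonSp d) := borel _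
instance (d : ℕ) : BorelSpace (CanonSp d) := ⟨rfl⟩

/-- The canonical (raw) filtration `F_s = σ(B_u, u ≤ s)` on the canonical space. -/
def canonFil (d : ℕ) : Filtration ℝ≥0 (inferInstance : MeasurableSpace (CanonSp d)) where
  seq s := ⨆ u ∈ Set.Iic s, MeasurableSpace.comap (fun ω : CanonSp d => ω u) inferInstance
  mono' := fun s t hst => biSup_mono fun u (hu : u ≤ s) => hu.trans hst
  le' := fun _s => iSup₂_le fun u _ =>
    Measurable.comap_le (ContinuousEvalConst.continuous_eval_const u).measurable

/-- The σ-algebra generated by the collection `N^P` of `P`-negligible sets. -/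
def nullSigma {α : Type*} {m : MeasurableSpace α} (P : @Measure α m) : MeasurableSpace α :=
  MeasurableSpace.generateFrom {A | ∃ N, MeasurableSet[m] N ∧ P N = 0 ∧ A ⊆ N}

/-- The `P`-augmented canonical filtration `F^P_s := F_s ∨ N^P`. -/
def augFil (d : ℕ) (P : Measure (CanonSp d)) :
    Filtration ℝ≥0 (⊤ : MeasurableSpace (CanonSp d)) where
  seq s := canonFil d s ⊔ nullSigma P
  mono' := fun s t hst => sup_le_sup_right ((canonFil d).mono hst) _
  le' := fun _ => le_top

/-- The stopped path `[ω]_t = (ω(t ∧ s))_{s ≥ 0}`. -/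
def stoppedPath {d : ℕ} (ω : CanonSp d) (t : ℝ≥0) : CanonSp d :=
  ω.comp ⟨fun s => min t s, continuous_const.min continuous_id⟩

/-- The concatenated path `w ⊗_t ω`, equal to `w` on `[0, t]` and to
`s ↦ w(t) + ω(s) - ω(t)` on `[t, ∞)`. -/
def concatPath {d : ℕ} (w : CanonSp d) (t : ℝ≥0) (ω : CanonSp d) : CanonSp d :=
  ⟨fun s => w (min s t) + ω (max s t) - ω t, by
    refine Continuous.sub (Continuous.add ?_ ?_) continuous_const
    · exact w.continuous.comp (continuous_id.min continuous_const)
    · exact ω.continuous.comp (continuous_id.max continuous_const)⟩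

/-- `P` is the Wiener measure on the canonical space: it is a probability measure,
the canonical process starts at `0` a.s., its increments after time `s` are
independent of `F_s`, and the increment `B_t - B_s` is a `d`-dimensional centered
Gaussian vector of covariance `(t-s) Id`. -/
def IsWienerMeasure (d : ℕ) (P : Measure (CanonSp d)) : Prop :=
  IsProbabilityMeasure P ∧
  (∀ᵐ ω ∂P, ω 0 = 0) ∧
  (∀ s t : ℝ≥0, s ≤ t →
    Indep (MeasurableSpace.comap (fun ω : CanonSp d => ω t - ω s) inferInstance)
      (canonFil d s) P) ∧
  (∀ s t : ℝ≥0, s ≤ t →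
    P.map (fun ω : CanonSp d => (EuclideanSpace.equiv (Fin d) ℝ) (ω t - ω s)) =
      Measure.pi fun _ : Fin d => gaussianReal 0 (t - s))

/-- The predictable σ-algebra on `ℝ₊ × α` associated with a filtration
`G = (G_s)`: it is generated by the sets `{0} × A` with `A ∈ G_0` and
`(u, v] × A` with `u < v` and `A ∈ G_u`. -/
def predictableSigma {α : Type*} (G : ℝ≥0 → MeasurableSpace α) :
    MeasurableSpace (ℝ≥0 × α) :=
  MeasurableSpace.generateFrom
    ({S | ∃ A : Set α, MeasurableSet[G 0] A ∧ S = ({0} : Set ℝ≥0) ×ˢ A} ∪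
     {S | ∃ (u v : ℝ≥0) (A : Set α), u < v ∧ MeasurableSet[G u] A ∧ S = Set.Ioc u v ×ˢ A})

section Independence

variable {Ω : Type*} {mΩ : MeasurableSpace Ω} {μ : Measure Ω}

lemma indep_sup_of_indep_of_le [IsProbabilityMeasure μ] {m₁ m₂ m₃ m' : MeasurableSpace Ω}
    (h₁ : m₁ ≤ mΩ) (h' : m' ≤ mΩ) (h₂ : m₂ ≤ m') (h₃ : m₃ ≤ m')
    (h₁' : Indep m₁ m' μ) (h₂₃ : Indep m₂ m₃ μ) :
    Indep (m₁ ⊔ m₂) m₃ μ := by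
  rw [Indep_iff] at h₁' h₂₃
  have hgen : m₁ ⊔ m₂ = MeasurableSpace.generateFrom
      {s | ∃ s₁ s₂, MeasurableSet[m₁] s₁ ∧ MeasurableSet[m₂] s₂ ∧ s = s₁ ∩ s₂} := by
    refine le_antisymm (sup_le ?_ ?_) (MeasurableSpace.generateFrom_le ?_)
    · exact fun s hs => MeasurableSpace.measurableSet_generateFrom
        ⟨s, Set.univ, hs, MeasurableSet.univ, (Set.inter_univ s).symm⟩
    · exact fun s hs => MeasurableSpace.measurableSet_generateFrom
        ⟨Set.univ, s, MeasurableSet.univ, hs, (Set.univ_inter s).symm⟩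
    · rintro s ⟨s₁, s₂, hs₁, hs₂, rfl⟩
      exact (le_sup_left (b := m₂) _ hs₁).inter (le_sup_right (a := m₁) _ hs₂)
  refine IndepSets.indep (sup_le h₁ (h₂.trans h')) (h₃.trans h') ?_
    (@MeasurableSpace.isPiSystem_measurableSet Ω m₃) hgen
    (@MeasurableSpace.generateFrom_measurableSet Ω m₃).symm ?_
  · rintro s ⟨s₁, s₂, hs₁, hs₂, rfl⟩ u ⟨u₁, u₂, hu₁, hu₂, rfl⟩ _
    exact ⟨s₁ ∩ u₁, s₂ ∩ u₂, hs₁.inter hu₁, hs₂.inter hu₂, Set.inter_inter_inter_comm _ _ _ _⟩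
  · rw [IndepSets_iff]
    rintro _ u ⟨s₁, s₂, hs₁, hs₂, rfl⟩ hu
    rw [Set.inter_assoc, h₁' s₁ (s₂ ∩ u) hs₁ ((h₂ _ hs₂).inter (h₃ _ hu)), h₂₃ s₂ u hs₂ hu,
      h₁' s₁ s₂ hs₁ (h₂ _ hs₂), mul_assoc]

variable {ι E : Type*} [LinearOrder ι] [MeasurableSpace E] [AddGroup E]

abbrev incrementSigma (X : ι → Ω → E) (s u : ι) : MeasurableSpace Ω :=
  MeasurableSpace.comap (fun ω => X u ω - X s ω) inferInstance

variable [MeasurableSub₂ E] {F : Filtration ι mΩ} {X : ι → Ω → E}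

lemma incrementSigma_le_filtration (hX : ∀ s, Measurable[F s] (X s)) {s u : ι} (hsu : s ≤ u) :
    incrementSigma X s u ≤ F u :=
  ((hX u).sub ((hX s).mono (F.mono hsu) le_rfl)).comap_le

variable [MeasurableAdd₂ E] [IsProbabilityMeasure μ]
  (hX : ∀ s, Measurable[F s] (X s)) (hinc : ∀ s u, s ≤ u → Indep (incrementSigma X s u) (F s) μ)
include hX hinc

lemma indep_biSup_incrementSigma_max (t : ι) (S : Finset ι) :
    Indep (⨆ r ∈ S, incrementSigma X t (max r t)) (F t) μ := by
  classical
  induction S using Finset.induction_on_max with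
  | empty => simpa using indep_bot_left (F t)
  | insert a S hlt ih =>
    rw [Finset.iSup_insert]
    rcases S.eq_empty_or_nonempty with rfl | hS
    · simpa using hinc t (max a t) (le_max_right a t)
    -- split `X_{a ∨ t} - X_t` at the last earlier time `b`
    set b := max (S.max' hS) t
    have hba : b ≤ max a t := max_le_max (hlt _ (S.max'_mem hS)).le le_rfl
    have hpast : ⨆ r ∈ S, incrementSigma X t (max r t) ≤ F b := iSup₂_le fun r hr =>
      (incrementSigma_le_filtration hX (le_max_right r t)).trans
        (F.mono (max_le_max (S.le_max' r hr) le_rfl))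
    have hsplit : incrementSigma X t (max a t) ≤
        incrementSigma X b (max a t) ⊔ ⨆ r ∈ S, incrementSigma X t (max r t) := by
      refine Measurable.comap_le ?_
      have hsum : (fun ω => X (max a t) ω - X t ω) =
          fun ω => (X (max a t) ω - X b ω) + (X b ω - X t ω) := by
        simp only [sub_add_sub_cancel]
      rw [hsum]
      exact (Measurable.of_comap_le le_sup_left).add
        (Measurable.of_comap_le (le_biSup (fun r => incrementSigma X t (max r t))
          (S.max'_mem hS) |>.trans le_sup_right))
    refine indep_of_indep_of_le_left ?_ (sup_le hsplit le_sup_right)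
    exact indep_sup_of_indep_of_le ((incrementSigma_le_filtration hX hba).trans (F.le _))
      (F.le b) hpast (F.mono (le_max_right _ t)) (hinc b _ hba) ih

lemma indep_iSup_incrementSigma_max (t : ι) :
    Indep (⨆ r, incrementSigma X t (max r t)) (F t) μ := by
  rw [iSup_eq_iSup_finset]
  exact indep_iSup_of_directed_le (indep_biSup_incrementSigma_max hX hinc t)
    (fun S => iSup₂_le fun r _ =>
      (incrementSigma_le_filtration hX (le_max_right r t)).trans (F.le _))
    (F.le t) (Monotone.directed_le fun _ _ hST =>
      biSup_mono fun _ hr => Finset.mem_of_subset hST hr)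

end Independence

section Predictable

variable {α : Type*} {G : ℝ≥0 → MeasurableSpace α}

lemma measurable_prodMk_left_predictableSigma (hG : Monotone G) (s : ℝ≥0) :
    Measurable[G s, predictableSigma G] (fun a : α => (s, a)) := by
  refine @measurable_generateFrom _ _ (G s) _ _ ?_
  rintro _ (⟨A, hA, rfl⟩ | ⟨u, v, A, -, hA, rfl⟩) <;>
    rw [Set.mk_preimage_prod_right_eq_if] <;> split_ifs with hs
  · exact hG (zero_le : 0 ≤ s) _ hA
  · exact @MeasurableSet.empty _ (G s)
  · exact hG hs.1.le _ hA
  · exact @MeasurableSet.empty _ (G s)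

lemma measurable_prodMap_predictableSigma {φ : α → α} (hφ : ∀ u, Measurable[G u, G u] φ) :
    Measurable[predictableSigma G, predictableSigma G] (Prod.map id φ) := by
  refine @measurable_generateFrom _ _ (predictableSigma G) _ _ ?_
  rintro _ (⟨A, hA, rfl⟩ | ⟨u, v, A, huv, hA, rfl⟩)
  · exact MeasurableSpace.measurableSet_generateFrom (Or.inl ⟨φ ⁻¹' A, hφ 0 hA, rfl⟩)
  · exact MeasurableSpace.measurableSet_generateFrom
      (Or.inr ⟨u, v, φ ⁻¹' A, huv, hφ u hA, rfl⟩)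

end Predictable

section Canonical

variable {d : ℕ}

lemma measurable_eval_canonFil {r u : ℝ≥0} (hr : r ≤ u) :
    Measurable[canonFil d u] (fun ω : CanonSp d => ω r) :=
  Measurable.of_comap_le (le_biSup (fun v => MeasurableSpace.comap (fun ω : CanonSp d => ω v) _)
    (Set.mem_Iic.mpr hr))

lemma measurable_to_canonFil {α : Type*} {m : MeasurableSpace α} {f : α → CanonSp d} {u : ℝ≥0}
    (hf : ∀ r ≤ u, Measurable[m] fun a => f a r) : Measurable[m, canonFil d u] f := by
  refine Measurable.of_comap_le ?_
  simp only [canonFil, MeasurableSpace.comap_iSup, MeasurableSpace.comap_comp]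
  exact iSup₂_le fun r hr => (hf r hr).comap_le

lemma concatPath_apply (w : CanonSp d) (t : ℝ≥0) (ω : CanonSp d) (r : ℝ≥0) :
    concatPath w t ω r = w (min r t) + (ω (max r t) - ω t) :=
  add_sub_assoc _ _ _

lemma measurable_concatPath_canonFil (w : CanonSp d) (t u : ℝ≥0) :
    Measurable[canonFil d u, canonFil d u] (concatPath w t) := by
  refine measurable_to_canonFil fun r hr => ?_
  simp only [concatPath_apply]
  rcases le_total t u with htu | hut
  · exact measurable_const.add ((measurable_eval_canonFil (max_le hr htu)).sub
      (measurable_eval_canonFil htu))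
  · simp only [max_eq_right (hr.trans hut), sub_self, add_zero]
    exact measurable_const

lemma measurable_concatPath_increments (w : CanonSp d) (t u : ℝ≥0) :
    Measurable[⨆ r, incrementSigma (fun r (ω : CanonSp d) => ω r) t (max r t), canonFil d u]
      (concatPath w t) := by
  refine measurable_to_canonFil fun r _ => ?_
  simp only [concatPath_apply]
  exact measurable_const.add (Measurable.of_comap_le (le_iSup
    (fun r => incrementSigma (fun r (ω : CanonSp d) => ω r) t (max r t)) r))

end Canonical

theorem shifted_control_predictable_and_indep_general {d : ℕ}
    (P : Measure (CanonSp d)) (hP : IsWienerMeasure d P)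
    {U : Type*} [MeasurableSpace U]
    (ν : ℝ≥0 → CanonSp d → U)
    (hν : Measurable[predictableSigma (fun s => canonFil d s)]
      (fun p : ℝ≥0 × CanonSp d => ν p.1 p.2))
    (t : ℝ≥0) (w : CanonSp d) :
    Measurable[predictableSigma (fun s => canonFil d s)]
      (fun p : ℝ≥0 × CanonSp d => ν p.1 (concatPath w t p.2)) ∧
    ProbabilityTheory.Indep
      (⨆ s : ℝ≥0, MeasurableSpace.comap (fun ω : CanonSp d => ν s (concatPath w t ω))
        inferInstance)
      (canonFil d t) P := by
  obtain ⟨hprob, -, hinc, -⟩ := hP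
  refine ⟨hν.comp (measurable_prodMap_predictableSigma (measurable_concatPath_canonFil w t)), ?_⟩
  have hfuture := indep_iSup_incrementSigma_max (F := canonFil d)
    (fun s => measurable_eval_canonFil le_rfl) hinc t
  refine indep_of_indep_of_le_left hfuture (iSup_le fun s => Measurable.comap_le ?_)
  exact (hν.comp (measurable_prodMk_left_predictableSigma (canonFil d).mono' s)).comp
    (measurable_concatPath_increments w t s)

/-- On the canonical space with Wiener measure `P`, let `ν` be a
`U`-valued `F`-predictable control (`U` Polish) and, for `t ≥ 0` and `w ∈ Ω`, let
`ν^{t,w}_s(ω) := ν_s(w ⊗_t ω)` be the shifted control. Then `ν^{t,w}` is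
`F`-predictable and the σ-algebra `σ(ν^{t,w}_s, s ≥ 0)` is independent of `F_t`
under `P`. -/
theorem shifted_control_predictable_and_indep {d : ℕ}
    (P : Measure (CanonSp d)) (hP : IsWienerMeasure d P)
    {U : Type*} [MeasurableSpace U] [TopologicalSpace U] [PolishSpace U] [BorelSpace U]
    (ν : ℝ≥0 → CanonSp d → U)
    (hν : Measurable[predictableSigma (fun s => canonFil d s)]
      (fun p : ℝ≥0 × CanonSp d => ν p.1 p.2))
    (t : ℝ≥0) (w : CanonSp d) :
    Measurable[predictableSigma (fun s => canonFil d s)]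
      (fun p : ℝ≥0 × CanonSp d => ν p.1 (concatPath w t p.2)) ∧
    ProbabilityTheory.Indep
      (⨆ s : ℝ≥0, MeasurableSpace.comap (fun ω : CanonSp d => ν s (concatPath w t ω))
        inferInstance)
      (canonFil d t) P :=
  shifted_control_predictable_and_indep_general P hP ν hν t w
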